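/- arXiv:1207.3781 — 2 statements merged into one kernel-verified Lean document; each statement's English description precedes it below -/
import Mathlib

section
/- Let R be a semiprime left Goldie ring and σ an endomorphism of R with large image. Then σ is injective if and only if σ maps regular elements of R to regular elements of R. Moreover, in that case σ extends canonically to an automorphism of the classical left quotient ring Q(R). -/
universe u v

/-- The left annihilator of the set `L` in `S` is zero. -/
def LAnnZero (S : Type u) [Ring S] (L : Set S) : Prop :=
  ∀ a : S, (∀ x ∈ L, a * x = 0) → a = 0

/-- The right annihilator of the set `L` in `S` is zero. -/
def RAnnZero (S : Type u) [Ring S] (L : Set S) : Prop :=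
  ∀ a : S, (∀ x ∈ L, x * a = 0) → a = 0

/-- A left ideal is essential: it meets every nonzero left ideal nontrivially. -/
def IsEssentialLeftIdeal {S : Type u} [Ring S] (L : Ideal S) : Prop :=
  ∀ I : Ideal S, I ≠ ⊥ → L ⊓ I ≠ ⊥

/-- A (possibly noncommutative) ring is semiprime: `aRa = 0` implies `a = 0`. -/
def IsSemiprimeRing (S : Type u) [Ring S] : Prop :=
  ∀ a : S, (∀ r : S, a * r * a = 0) → a = 0

/-- A (possibly noncommutative) ring is prime: it is nonzero and `aRb = 0`
implies `a = 0` or `b = 0`. -/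
def IsPrimeRingE (S : Type u) [Ring S] : Prop :=
  Nontrivial S ∧ ∀ a b : S, (∀ r : S, a * r * b = 0) → a = 0 ∨ b = 0

/-- `a` is left regular: its left annihilator is zero. -/
def LeftReg {S : Type u} [Ring S] (a : S) : Prop := ∀ x : S, x * a = 0 → x = 0

/-- `a` is right regular: its right annihilator is zero. -/
def RightReg {S : Type u} [Ring S] (a : S) : Prop := ∀ x : S, a * x = 0 → x = 0

/-- `a` is regular: neither a left nor a right zero divisor. -/
def Reg {S : Type u} [Ring S] (a : S) : Prop := LeftReg a ∧ RightReg a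

/-- A self-map of a ring has large image: its range contains an essential
left ideal with zero right annihilator. -/
def HasLargeImage {S : Type u} [Ring S] (f : S → S) : Prop :=
  ∃ L : Ideal S, IsEssentialLeftIdeal L ∧ RAnnZero S (L : Set S) ∧ (L : Set S) ⊆ Set.range f

/-- The left annihilator of a set, as a left ideal. -/
def lAnnIdeal (S : Type u) [Ring S] (X : Set S) : Ideal S where
  carrier := {a | ∀ x ∈ X, a * x = 0}
  add_mem' := by intro a b ha hb x hx; rw [add_mul, ha x hx, hb x hx, add_zero]
  zero_mem' := by intro x hx; rw [zero_mul]
  smul_mem' := by intro r a ha x hx; simp only [smul_eq_mul, mul_assoc, ha x hx, mul_zero]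

/-- ACC on left annihilator ideals. -/
def AccLeftAnn (S : Type u) [Ring S] : Prop :=
  ∀ X : ℕ → Set S, (∀ n, lAnnIdeal S (X n) ≤ lAnnIdeal S (X (n + 1))) →
    ∃ N, ∀ m, N ≤ m → lAnnIdeal S (X m) = lAnnIdeal S (X N)

/-- Finite uniform (Goldie) dimension on the left: no infinite independent
family of nonzero left ideals. -/
def FinUdim (S : Type u) [Ring S] : Prop :=
  ¬ ∃ f : ℕ → Ideal S, (∀ n, f n ≠ ⊥) ∧ iSupIndep f

/-- Left Goldie ring: ACC on left annihilators and finite left uniform dimension. -/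
def IsLeftGoldie (S : Type u) [Ring S] : Prop := AccLeftAnn S ∧ FinUdim S

/-- The left uniform (Goldie) dimension of `S` is at least `n`. -/
def UdimGE (S : Type u) [Ring S] (n : ℕ) : Prop :=
  ∃ f : Fin n → Ideal S, (∀ i, f i ≠ ⊥) ∧ iSupIndep f

/-- `ι : R →+* Q` realizes `Q` as a classical left quotient ring of `R`:
`ι` is injective, regular elements become units, and every element of `Q`
is a left fraction `(ι s)⁻¹ * (ι a)` with `s` regular. -/
structure IsLeftQuotRing {R : Type u} {Q : Type v} [Ring R] [Ring Q] (ι : R →+* Q) : Prop where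
  inj : Function.Injective ι
  unit : ∀ a : R, Reg a → IsUnit (ι a)
  frac : ∀ q : Q, ∃ a s : R, Reg s ∧ ι s * q = ι a

/-- An ideal (a priori only a left ideal) is two-sided. -/
def IsTwoSided {S : Type u} [Ring S] (I : Ideal S) : Prop := ∀ x ∈ I, ∀ r : S, x * r ∈ I

/-- ACC on two-sided ideals. -/
def AccTwoSided (S : Type u) [Ring S] : Prop :=
  ∀ f : ℕ → Ideal S, (∀ n, IsTwoSided (f n)) → (∀ n, f n ≤ f (n + 1)) →
    ∃ N, ∀ m, N ≤ m → f m = f N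

/-- A trivially ordered set: no strict comparabilities. -/
def TrivOrd (P : Type u) [Preorder P] : Prop := ∀ x y : P, ¬ x < y

/-- `DevLE α P` : the deviation (in the sense of Gabriel–Rentschler) of the
poset `P` is at most `α` (where trivially ordered intervals count as having
deviation `-∞`). -/
def DevLE (α : Ordinal.{v}) (P : Type u) [Preorder P] : Prop :=
  ∀ f : ℕ → P, (∀ n, f (n + 1) ≤ f n) →
    ∃ N : ℕ, ∀ n, N ≤ n →
      TrivOrd ↥(Set.Icc (f (n + 1)) (f n)) ∨
      ∃ β, ∃ _ : β < α, DevLE β ↥(Set.Icc (f (n + 1)) (f n))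
termination_by α

/-- `R` has left Krull dimension in the sense of Gabriel–Rentschler: the
poset of left ideals of `R` has deviation. -/
def HasLeftKrullDim (R : Type u) [Ring R] : Prop :=
  ∃ α : Ordinal.{u}, DevLE α (Ideal R)

/-- `(A, ι, τ)` is a Cohn–Jordan extension of `(R, σ)`: `ι : R → A` is an
injective embedding, the automorphism `τ` of `A` extends `σ`, and every
element of `A` is mapped into `R` by some positive power of `τ`. -/
structure IsCohnJordan {R A : Type u} [Ring R] [Ring A] (σ : R →+* R) (ι : R →+* A)
    (τ : A ≃+* A) : Prop where
  inj : Function.Injective ι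
  comm : ∀ r : R, τ (ι r) = ι (σ r)
  small : ∀ a : A, ∃ n : ℕ, 1 ≤ n ∧ (⇑τ)^[n] a ∈ Set.range ι

/-!
Goldie's theorem provides the two facts used throughout: in a semiprime left Goldie ring every
left regular element is regular, and every essential left ideal contains a regular element.

If `σ` is injective and `x * σ a = 0` with `x ≠ 0`, some nonzero `r * x` lies in the essential
left ideal `L ⊆ σ(R)`, say `r * x = σ v`; then `σ (v * a) = 0`, so `v * a = 0` with `v ≠ 0`.

Conversely, let `K = ker σ` and `B` its left annihilator. Semiprimeness makes `K ⊕ B` essential,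
so it contains a regular `k + b`, and `σ (k + b) = σ b` is regular; hence `B * v = 0` forces
`σ v = 0`. Consequently `W ↦ B ∩ σ⁻¹(L ∩ W)` maps nonzero left ideals to nonzero left ideals,
and since `σ` is injective on `B`, its iterates on `K` form an independent family, which finite
uniform dimension only allows when `K = 0`.

Finally, by the Ore condition any ring map on `R` inverting regular elements extends along
`R → Q(R)`. Applied to `ι ∘ σ` this gives an injective endomorphism of `Q(R)`, which is onto
because any fraction `s⁻¹ a` can be rewritten as `(t s)⁻¹ (t a)` with `t s, t a ∈ L ⊆ σ(R)`.
-/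

section Basic

variable {R : Type u} [Ring R]

@[simp]
theorem mem_lAnnIdeal_singleton {x a : R} : a ∈ lAnnIdeal R {x} ↔ a * x = 0 :=
  ⟨fun h => h x rfl, fun h _ hy => by rwa [Set.mem_singleton_iff.1 hy]⟩

theorem mul_mem_lAnnIdeal {K : Ideal R} [K.IsTwoSided] {b : R} (hb : b ∈ lAnnIdeal R K) (v : R) :
    b * v ∈ lAnnIdeal R K := fun k hk => by
  rw [mul_assoc]
  exact hb _ (K.mul_mem_left v hk)

theorem leftReg_iff_isRightRegular {a : R} : LeftReg a ↔ IsRightRegular a :=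
  isRightRegular_iff_left_eq_zero_of_mul.symm

theorem reg_iff_isRegular {a : R} : Reg a ↔ IsRegular a := by
  rw [isRegular_iff_eq_zero_of_mul, and_comm]
  rfl

theorem reg_one : Reg (1 : R) := reg_iff_isRegular.2 isRegular_one

theorem Reg.mul {a b : R} (ha : Reg a) (hb : Reg b) : Reg (a * b) :=
  reg_iff_isRegular.2 ((reg_iff_isRegular.1 ha).mul (reg_iff_isRegular.1 hb))

end Basic

namespace IsEssentialLeftIdeal

variable {R : Type u} [Ring R] {E F : Ideal R}

theorem mono (hE : IsEssentialLeftIdeal E) (h : E ≤ F) : IsEssentialLeftIdeal F :=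
  fun I hI hF => hE I hI (eq_bot_iff.2 (hF ▸ inf_le_inf_right I h))

theorem top : IsEssentialLeftIdeal (⊤ : Ideal R) := fun I hI => by rwa [top_inf_eq]

theorem inf (hE : IsEssentialLeftIdeal E) (hF : IsEssentialLeftIdeal F) :
    IsEssentialLeftIdeal (E ⊓ F) := fun I hI => by
  rw [inf_assoc]
  exact hE _ (hF I hI)

theorem comap (hE : IsEssentialLeftIdeal E) (φ : R →ₗ[R] R) :
    IsEssentialLeftIdeal (Submodule.comap φ E) := by
  intro I hI
  by_cases hφ : Submodule.map φ I = ⊥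
  · rwa [inf_eq_right.2 ((LinearMap.le_ker_iff_map.2 hφ).trans (LinearMap.ker_le_comap φ))]
  · obtain ⟨_, ⟨hyE, i, hi, rfl⟩, hy0⟩ := (Submodule.ne_bot_iff _).1 (hE _ hφ)
    exact (Submodule.ne_bot_iff _).2 ⟨i, ⟨hyE, hi⟩, fun h => hy0 (by rw [h, map_zero])⟩

end IsEssentialLeftIdeal

theorem iSupIndep_of_disjoint_iSup_gt {α : Type*} [CompleteLattice α] [IsModularLattice α]
    [IsCompactlyGenerated α] {f : ℕ → α} (h : ∀ n, Disjoint (f n) (⨆ m > n, f m)) :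
    iSupIndep f := by
  classical
  refine iSupIndep_iff_supIndep.2 fun s => ?_
  induction s using Finset.induction_on_min with
  | empty => exact Finset.supIndep_empty f
  | insert a s has ih =>
    exact ih.insert <|
      (h a).mono_right (Finset.sup_le fun m hm => le_iSup₂_of_le m (has m hm) le_rfl)

namespace AccLeftAnn

variable {R : Type u} [Ring R]

theorem exists_maximal (hacc : AccLeftAnn R) {A : Set R} (hA : A.Nonempty) :
    ∃ a ∈ A, ∀ b ∈ A, lAnnIdeal R {a} ≤ lAnnIdeal R {b} → lAnnIdeal R {b} = lAnnIdeal R {a} := by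
  have hwf : WellFounded fun a b : R => lAnnIdeal R {b} < lAnnIdeal R {a} :=
    wellFounded_iff_isEmpty_descending_chain.2 ⟨fun ⟨f, hf⟩ => by
      obtain ⟨N, hN⟩ := hacc (fun n => {f n}) fun n => (hf n).le
      exact (hf N).ne' (hN (N + 1) N.le_succ)⟩
  obtain ⟨a, ha, hmin⟩ := hwf.has_min A hA
  exact ⟨a, ha, fun b hb hle => (eq_of_le_of_not_lt hle (hmin b hb)).symm⟩

theorem isNilpotent_of_isEssential (hacc : AccLeftAnn R) {z : R}
    (hz : IsEssentialLeftIdeal (lAnnIdeal R {z})) : IsNilpotent z := by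
  obtain ⟨_, ⟨n, rfl⟩, hmax⟩ := hacc.exists_maximal (Set.range_nonempty (z ^ · : ℕ → R))
  have hstable : lAnnIdeal R {z ^ (n + 1)} = lAnnIdeal R {z ^ n} :=
    hmax _ ⟨n + 1, rfl⟩ fun x hx => by
      rw [mem_lAnnIdeal_singleton] at hx ⊢
      rw [pow_succ, ← mul_assoc, hx, zero_mul]
  have hdisj : lAnnIdeal R {z} ⊓ (R ∙ z ^ n) = ⊥ := by
    rw [eq_bot_iff]
    rintro _ ⟨hxz, hx⟩
    obtain ⟨r, rfl⟩ := Submodule.mem_span_singleton.1 hx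
    have hr : r ∈ lAnnIdeal R {z ^ (n + 1)} := by
      simpa [pow_succ, mul_assoc] using hxz
    rw [hstable, mem_lAnnIdeal_singleton] at hr
    simpa using hr
  refine ⟨n, by_contra fun h => hz _ ?_ hdisj⟩
  rwa [Ne, Submodule.span_singleton_eq_bot]

end AccLeftAnn

def singularIdeal (R : Type u) [Ring R] : Ideal R where
  carrier := {z | IsEssentialLeftIdeal (lAnnIdeal R {z})}
  add_mem' ha hb := (ha.inf hb).mono fun x hx => by simp_all [mul_add]
  zero_mem' := IsEssentialLeftIdeal.top.mono fun _ _ => by simp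
  smul_mem' r _ hz := (hz.comap (LinearMap.toSpanSingleton R R r)).mono fun x hx => by
    simp_all [mul_assoc]

namespace IsSemiprimeRing

variable {R : Type u} [Ring R]

theorem eq_bot_of_forall_isNilpotent (hsp : IsSemiprimeRing R) (hacc : AccLeftAnn R)
    {J : Ideal R} (hJ : ∀ x ∈ J, IsNilpotent x) : J = ⊥ := by
  by_contra hne
  obtain ⟨x, hxJ, hx0⟩ := (Submodule.ne_bot_iff J).1 hne
  obtain ⟨a, ⟨haJ, ha0⟩, hmax⟩ := hacc.exists_maximal (A := {x | x ∈ J ∧ x ≠ 0}) ⟨x, hxJ, hx0⟩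
  refine ha0 (hsp a fun r => ?_)
  -- if `c = a (ra)^(k+1) ≠ 0`, then `lAnn c = lAnn a` by maximality, and `ar ∈ lAnn c`
  have key : ∀ k, a * (r * a) ^ (k + 1) = 0 → a * r * a = 0 := by
    intro k
    induction k with
    | zero => simp [mul_assoc]
    | succ k ih =>
      intro hk
      by_cases hc : a * (r * a) ^ (k + 1) = 0
      · exact ih hc
      have hcJ : a * (r * a) ^ (k + 1) ∈ J := by
        rw [SemiconjBy.pow_right (x := r * a) (y := a * r) (mul_assoc a r a).symm]
        exact J.mul_mem_left _ haJ
      have heq := hmax _ ⟨hcJ, hc⟩ fun y hy => by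
        rw [mem_lAnnIdeal_singleton] at hy ⊢
        rw [← mul_assoc, hy, zero_mul]
      have har : a * r ∈ lAnnIdeal R {a * (r * a) ^ (k + 1)} := by
        rw [mem_lAnnIdeal_singleton, ← hk, pow_succ' _ (k + 1)]
        simp only [mul_assoc]
      rwa [heq, mem_lAnnIdeal_singleton] at har
  obtain ⟨m, hm⟩ := hJ _ (J.mul_mem_left r haJ)
  exact key m (by rw [pow_succ, hm, zero_mul, mul_zero])

theorem eq_zero_of_isEssential_lAnnIdeal (hsp : IsSemiprimeRing R) (hacc : AccLeftAnn R) {z : R}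
    (hz : IsEssentialLeftIdeal (lAnnIdeal R {z})) : z = 0 := by
  have hZ : singularIdeal R = ⊥ :=
    hsp.eq_bot_of_forall_isNilpotent hacc fun x hx => hacc.isNilpotent_of_isEssential hx
  simpa [hZ] using (show z ∈ singularIdeal R from hz)

theorem exists_ne_zero_lAnnIdeal_mul_self_le (hsp : IsSemiprimeRing R) (hacc : AccLeftAnn R)
    {J : Ideal R} (hJ : J ≠ ⊥) :
    ∃ a ∈ J, a ≠ 0 ∧ lAnnIdeal R {a * a} ≤ lAnnIdeal R {a} := by
  have hA : {x | x ∈ J ∧ ¬IsNilpotent x}.Nonempty := by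
    by_contra h
    refine hJ (hsp.eq_bot_of_forall_isNilpotent hacc fun x hx => ?_)
    by_contra hx'
    exact h ⟨x, hx, hx'⟩
  obtain ⟨a, ⟨haJ, ha⟩, hmax⟩ := hacc.exists_maximal hA
  refine ⟨a, haJ, fun h => ha (h ▸ IsNilpotent.zero), ?_⟩
  have hsq : ¬IsNilpotent (a * a) := fun ⟨n, hn⟩ => ha ⟨2 * n, by rwa [pow_mul, sq]⟩
  rw [hmax _ ⟨J.mul_mem_left a haJ, hsq⟩ fun x hx => by
    rw [mem_lAnnIdeal_singleton] at hx ⊢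
    rw [← mul_assoc, hx, zero_mul]]

end IsSemiprimeRing

theorem FinUdim.isEssential_span_singleton {R : Type u} [Ring R] (hdim : FinUdim R) {c : R}
    (hc : LeftReg c) : IsEssentialLeftIdeal (R ∙ c) := by
  intro I hI hdisj
  have hinj (n : ℕ) : Function.Injective (LinearMap.toSpanSingleton R R (c ^ n)) :=
    (leftReg_iff_isRightRegular.1 hc).pow n
  refine hdim ⟨fun n => Submodule.map (LinearMap.toSpanSingleton R R (c ^ n)) I,
    fun n h => hI <|
      Submodule.map_injective_of_injective (hinj n) (h.trans (Submodule.map_bot _).symm),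
    iSupIndep_of_disjoint_iSup_gt fun n => ?_⟩
  have hle : (⨆ m > n, Submodule.map (LinearMap.toSpanSingleton R R (c ^ m)) I) ≤ R ∙ c ^ (n + 1) :=
    iSup₂_le fun m hm => by
      rintro _ ⟨i, -, rfl⟩
      refine Submodule.mem_span_singleton.2 ⟨i * c ^ (m - (n + 1)), ?_⟩
      simp [mul_assoc, ← pow_add, Nat.sub_add_cancel hm]
  refine Disjoint.mono_right hle (Submodule.disjoint_def.2 ?_)
  rintro _ ⟨i, hi, rfl⟩ hx
  obtain ⟨r, hr⟩ := Submodule.mem_span_singleton.1 hx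
  have hirc : i = r * c := hinj n (by simp [← hr, pow_succ', mul_assoc])
  have hi0 : i ∈ I ⊓ (R ∙ c) := ⟨hi, Submodule.mem_span_singleton.2 ⟨r, hirc.symm⟩⟩
  rw [inf_comm, hdisj, Submodule.mem_bot] at hi0
  simp [hi0]

theorem IsSemiprimeRing.reg_of_leftReg {R : Type u} [Ring R] (hsp : IsSemiprimeRing R)
    (hg : IsLeftGoldie R) {c : R} (hc : LeftReg c) : Reg c :=
  ⟨hc, fun _ hx => hsp.eq_zero_of_isEssential_lAnnIdeal hg.1 <|
    (hg.2.isEssential_span_singleton hc).mono <|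
      (Submodule.span_singleton_le_iff_mem _ _).2 (mem_lAnnIdeal_singleton.2 hx)⟩

theorem exists_seq_of_forall_exists_append {α : Type*} {P : List α → Prop} (h0 : P [])
    (h : ∀ l, P l → ∃ a, P (l ++ [a])) : ∃ f : ℕ → α, ∀ n, P ((List.range n).map f) := by
  choose g hg using h
  let F : ℕ → {l // P l} := fun n => Nat.rec ⟨[], h0⟩ (fun _ l => ⟨l.1 ++ [g l.1 l.2], hg _ _⟩) n
  have hF (n : ℕ) : (F n).1 = (List.range n).map fun k => g (F k).1 (F k).2 := by
    induction n with
    | zero => rfl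
    | succ n ih => rw [List.range_succ, List.map_append, ← ih]; rfl
  exact ⟨fun k => g (F k).1 (F k).2, fun n => hF n ▸ (F n).2⟩

section Goldie

variable {R : Type u} [Ring R]

theorem forall_mul_eq_zero_of_mul_sum_eq_zero {l : List R}
    (hl : l.Pairwise fun a b => b * a = 0) (hsq : ∀ a ∈ l, lAnnIdeal R {a * a} ≤ lAnnIdeal R {a})
    {x : R} (hx : x * l.sum = 0) : ∀ a ∈ l, x * a = 0 := by
  induction l with
  | nil => simp
  | cons a l ih =>
    rw [List.pairwise_cons] at hl
    rw [List.sum_cons] at hx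
    have hla : l.sum * a = 0 := by
      have : (l.map fun b => b * a).sum = 0 := List.sum_eq_zero (by simpa using hl.1)
      rwa [List.sum_map_mul_right, List.map_id'] at this
    have hxa : x * a = 0 := by
      refine mem_lAnnIdeal_singleton.1 (hsq a List.mem_cons_self (mem_lAnnIdeal_singleton.2 ?_))
      have := congrArg (· * a) hx
      simpa only [add_mul, mul_add, mul_assoc, hla, mul_zero, add_zero, zero_mul] using this
    rw [mul_add, hxa, zero_add] at hx
    simpa [hxa] using ih hl.2 (fun b hb => hsq b (List.mem_cons_of_mem a hb)) hx

theorem iSupIndep_span_of_mul_eq_zero {f : ℕ → R}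
    (hsq : ∀ n, lAnnIdeal R {f n * f n} ≤ lAnnIdeal R {f n})
    (hf : ∀ i j, i < j → f j * f i = 0) : iSupIndep fun n => R ∙ f n := by
  refine iSupIndep_of_disjoint_iSup_gt fun n => ?_
  have hle : (⨆ m > n, R ∙ f m) ≤ lAnnIdeal R {f n} := iSup₂_le fun m hm =>
    (Submodule.span_singleton_le_iff_mem _ _).2 (mem_lAnnIdeal_singleton.2 (hf n m hm))
  refine Disjoint.mono_right hle (Submodule.disjoint_def.2 fun x hx hxn => ?_)
  obtain ⟨r, rfl⟩ := Submodule.mem_span_singleton.1 hx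
  exact mem_lAnnIdeal_singleton.1 (hsq n (by simpa [mul_assoc] using hxn))

theorem IsEssentialLeftIdeal.exists_reg_mem (hsp : IsSemiprimeRing R) (hg : IsLeftGoldie R)
    {E : Ideal R} (hE : IsEssentialLeftIdeal E) : ∃ a ∈ E, Reg a := by
  suffices ∃ a ∈ E, LeftReg a from
    let ⟨a, ha, hreg⟩ := this; ⟨a, ha, hsp.reg_of_leftReg hg hreg⟩
  by_contra! hE'
  let P : List R → Prop := fun l => (l.Pairwise fun a b => b * a = 0) ∧
    ∀ a ∈ l, a ∈ E ∧ a ≠ 0 ∧ lAnnIdeal R {a * a} ≤ lAnnIdeal R {a}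
  -- `l.sum ∈ E` is not left regular, so the elements of `l` have a common left annihilator
  have hstep (l : List R) (hl : P l) : ∃ a, P (l ++ [a]) := by
    obtain ⟨x, hx, hx0⟩ : ∃ x, x * l.sum = 0 ∧ x ≠ 0 := by
      simpa [LeftReg] using hE' _ (E.list_sum_mem fun a ha => (hl.2 a ha).1)
    have hann : lAnnIdeal R {a | a ∈ l} ≠ ⊥ := (Submodule.ne_bot_iff _).2
      ⟨x, forall_mul_eq_zero_of_mul_sum_eq_zero hl.1 (fun a ha => (hl.2 a ha).2.2) hx, hx0⟩
    obtain ⟨a, ⟨haE, hal⟩, ha0, hsq⟩ := hsp.exists_ne_zero_lAnnIdeal_mul_self_le hg.1 (hE _ hann)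
    refine ⟨a, List.pairwise_append.2 ⟨hl.1, List.pairwise_singleton _ _, ?_⟩, ?_⟩
    · simpa using fun b hb => hal b hb
    · intro b hb
      rcases List.mem_append.1 hb with hb | hb
      · exact hl.2 b hb
      · rw [List.mem_singleton.1 hb]
        exact ⟨haE, ha0, hsq⟩
  obtain ⟨f, hf⟩ := exists_seq_of_forall_exists_append (P := P) (by simp [P]) hstep
  have hf' (n : ℕ) : P ((List.range n).map f ++ [f n]) := by
    simpa [List.range_succ] using hf (n + 1)
  have hfn (n : ℕ) := (hf' n).2 (f n) (by simp)
  refine hg.2 ⟨fun n => R ∙ f n, fun n => by simpa using (hfn n).2.1,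
    iSupIndep_span_of_mul_eq_zero (fun n => (hfn n).2.2) fun i j hij => ?_⟩
  exact (List.pairwise_append.1 (hf' j).1).2.2 (f i) (by simpa using ⟨i, hij, rfl⟩) (f j) (by simp)

end Goldie

namespace IsSemiprimeRing

variable {R : Type u} [Ring R]

theorem mem_lAnnIdeal_of_forall_mul_eq_zero (K : Ideal R) [K.IsTwoSided]
    (hsp : IsSemiprimeRing R) {z : R} (hz : ∀ k ∈ K, k * z = 0) : z ∈ lAnnIdeal R K := fun k hk =>
  hsp _ fun r => by
    calc z * k * r * (z * k) = z * (k * r * z * k) := by simp only [mul_assoc]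
      _ = 0 := by rw [hz _ (K.mul_mem_right r hk), zero_mul, mul_zero]

theorem disjoint_lAnnIdeal (K : Ideal R) (hsp : IsSemiprimeRing R) : Disjoint K (lAnnIdeal R K) :=
  Submodule.disjoint_def.2 fun z hzK hzB =>
    hsp z fun r => by rw [mul_assoc]; exact hzB _ (K.mul_mem_left r hzK)

theorem isEssential_sup_lAnnIdeal (K : Ideal R) [K.IsTwoSided] (hsp : IsSemiprimeRing R) :
    IsEssentialLeftIdeal (K ⊔ lAnnIdeal R K) := by
  intro I hI hdisj
  have hmem {z : R} (hz : z ∈ (K ⊔ lAnnIdeal R K) ⊓ I) : z = 0 := by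
    rwa [hdisj, Submodule.mem_bot] at hz
  refine hI (eq_bot_iff.2 fun z hz => ?_)
  have hzB : z ∈ lAnnIdeal R K := hsp.mem_lAnnIdeal_of_forall_mul_eq_zero K fun k hk =>
    hmem ⟨Submodule.mem_sup_left (K.mul_mem_right z hk), I.mul_mem_left k hz⟩
  exact hmem ⟨Submodule.mem_sup_right hzB, hz⟩

end IsSemiprimeRing

section Endomorphism

variable {R : Type u} [Ring R] {σ : R →+* R} {L : Ideal R}

theorem leftReg_map_of_injective (hinj : Function.Injective σ) (hL : IsEssentialLeftIdeal L)
    (hLσ : (L : Set R) ⊆ Set.range σ) {a : R} (ha : LeftReg a) : LeftReg (σ a) := by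
  intro x hx
  by_contra hx0
  obtain ⟨_, ⟨hzL, hzx⟩, hz0⟩ :=
    (Submodule.ne_bot_iff _).1 (hL (R ∙ x) (by rwa [Ne, Submodule.span_singleton_eq_bot]))
  obtain ⟨v, rfl⟩ := hLσ hzL
  obtain ⟨r, hr⟩ := Submodule.mem_span_singleton.1 hzx
  have hva : v * a = 0 := hinj <| by
    rw [map_mul, ← hr, smul_eq_mul, mul_assoc, hx, mul_zero, map_zero]
  exact hz0 (by rw [ha v hva, map_zero])

theorem map_eq_zero_of_forall_lAnnIdeal_ker_mul_eq_zero (hsp : IsSemiprimeRing R)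
    (hg : IsLeftGoldie R) (hσ : ∀ a : R, Reg a → Reg (σ a)) {v : R}
    (hv : ∀ b ∈ lAnnIdeal R (RingHom.ker σ), b * v = 0) : σ v = 0 := by
  obtain ⟨c, hc, hreg⟩ :=
    (hsp.isEssential_sup_lAnnIdeal (RingHom.ker σ)).exists_reg_mem hsp hg
  obtain ⟨k, hk, b, hb, rfl⟩ := Submodule.mem_sup.1 hc
  refine (hσ _ hreg).2 _ ?_
  rw [← map_mul, add_mul, hv b hb, add_zero, map_mul, RingHom.mem_ker.1 hk, zero_mul]

theorem iSupIndep_of_le_comap {B : Ideal R} (hB : Disjoint (RingHom.ker σ) B)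
    {Z : ℕ → Ideal R} (h0 : Z 0 ≤ RingHom.ker σ) (hZ : ∀ n, Z (n + 1) ≤ B ⊓ (Z n).comap σ) :
    iSupIndep Z := by
  refine iSupIndep_of_disjoint_iSup_gt fun n => ?_
  induction n with
  | zero =>
    refine hB.mono h0 (iSup₂_le fun m hm => ?_)
    obtain ⟨m, rfl⟩ := Nat.exists_eq_succ_of_ne_zero hm.ne'
    exact (hZ m).trans inf_le_left
  | succ n ih =>
    have hle : (⨆ m > n + 1, Z m) ≤ (⨆ m > n, Z m).comap σ := iSup₂_le fun m hm => by
      obtain ⟨m, rfl⟩ := Nat.exists_eq_add_of_lt hm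
      exact (hZ (n + 1 + m)).trans (inf_le_right.trans
        (Ideal.comap_mono (le_iSup₂_of_le (n + 1 + m) (by omega) le_rfl)))
    refine Submodule.disjoint_def.2 fun z hz hz' => ?_
    have hσz : σ z = 0 := Submodule.disjoint_def.1 ih _ (hZ n hz).2 (hle hz')
    exact Submodule.disjoint_def.1 hB z hσz (hZ n hz).1

theorem injective_of_forall_lAnnIdeal_ker_mul_eq_zero (hsp : IsSemiprimeRing R)
    (hdim : FinUdim R) (hL : IsEssentialLeftIdeal L) (hLσ : (L : Set R) ⊆ Set.range σ)
    (hσ : ∀ v : R, (∀ b ∈ lAnnIdeal R (RingHom.ker σ), b * v = 0) → σ v = 0) :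
    Function.Injective σ := by
  set B := lAnnIdeal R (RingHom.ker σ)
  let Φ : Ideal R → Ideal R := fun W => B ⊓ (L ⊓ W).comap σ
  have hΦ {W : Ideal R} (hW : W ≠ ⊥) : Φ W ≠ ⊥ := by
    obtain ⟨_, ⟨hwL, hwW⟩, hw0⟩ := (Submodule.ne_bot_iff _).1 (hL W hW)
    obtain ⟨v, rfl⟩ := hLσ hwL
    obtain ⟨b, hb, hbv⟩ : ∃ b ∈ B, b * v ≠ 0 := by
      by_contra! h
      exact hw0 (hσ v h)
    refine (Submodule.ne_bot_iff _).2 ⟨b * v, ⟨mul_mem_lAnnIdeal hb v, Ideal.mem_comap.2 ?_⟩, hbv⟩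
    rw [map_mul]
    exact ⟨L.mul_mem_left _ hwL, W.mul_mem_left _ hwW⟩
  rw [RingHom.injective_iff_ker_eq_bot]
  by_contra hK
  refine hdim ⟨fun n => Φ^[n] (RingHom.ker σ), fun n => ?_,
    iSupIndep_of_le_comap (hsp.disjoint_lAnnIdeal _) le_rfl fun n => ?_⟩
  · induction n with
    | zero => exact hK
    | succ n ih =>
      show Φ^[n + 1] _ ≠ ⊥
      rw [Function.iterate_succ_apply']
      exact hΦ ih
  · show Φ^[n + 1] _ ≤ _
    rw [Function.iterate_succ_apply']
    exact inf_le_inf_left _ (Ideal.comap_mono inf_le_right)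

end Endomorphism

namespace IsLeftQuotRing

variable {R : Type u} {Q : Type v} [Ring R] [Ring Q] {ι : R →+* Q}

theorem exists_ore (hQ : IsLeftQuotRing ι) {a s : R} (hs : Reg s) :
    ∃ t b : R, Reg t ∧ t * a = b * s := by
  obtain ⟨u, hu⟩ := hQ.unit s hs
  obtain ⟨b, t, ht, h⟩ := hQ.frac (ι a * ↑u⁻¹)
  refine ⟨t, b, ht, hQ.inj ?_⟩
  rw [map_mul, map_mul, ← hu, ← h, mul_assoc, Units.inv_mul_cancel_right]

theorem exists_common_denominator (hQ : IsLeftQuotRing ι) (x y : Q) :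
    ∃ s a b : R, Reg s ∧ ι s * x = ι a ∧ ι s * y = ι b := by
  obtain ⟨a, s, hs, hx⟩ := hQ.frac x
  obtain ⟨b, d, hd, hy⟩ := hQ.frac y
  obtain ⟨t, c, ht, htc⟩ := hQ.exists_ore (a := s) hd
  refine ⟨t * s, t * a, c * b, ht.mul hs, ?_, ?_⟩
  · rw [map_mul, mul_assoc, hx, map_mul]
  · rw [htc, map_mul, mul_assoc, hy, map_mul]

variable {T : Type*} [Ring T] {f : R →+* T}

theorem map_mul_eq_of_frac (hQ : IsLeftQuotRing ι) (hf : ∀ s : R, Reg s → IsUnit (f s))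
    {q : Q} {a s a' s' : R} (hs : Reg s) (h : ι s * q = ι a)
    (h' : ι s' * q = ι a') {u : T} (hu : f s * u = f a) : f s' * u = f a' := by
  obtain ⟨t, b, ht, htb⟩ := hQ.exists_ore (a := s') hs
  have hab : t * a' = b * a := hQ.inj <| by
    rw [map_mul, map_mul, ← h', ← h, ← mul_assoc, ← mul_assoc, ← map_mul, ← map_mul, htb]
  apply (hf t ht).mul_left_cancel
  rw [← mul_assoc, ← map_mul, htb, map_mul, mul_assoc, hu, ← map_mul, ← map_mul, hab]

theorem exists_mul_eq (hQ : IsLeftQuotRing ι) (hf : ∀ s : R, Reg s → IsUnit (f s))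
    (q : Q) : ∃ u : T, ∃ a s : R, Reg s ∧ ι s * q = ι a ∧ f s * u = f a := by
  obtain ⟨a, s, hs, h⟩ := hQ.frac q
  obtain ⟨v, hv⟩ := hf s hs
  exact ⟨↑v⁻¹ * f a, a, s, hs, h, by rw [← hv, Units.mul_inv_cancel_left]⟩

/-- `(f s)⁻¹ * f a` for a presentation `ι s * q = ι a`; by `map_mul_eq_of_frac` it does not
depend on the presentation. -/
noncomputable def liftFun (hQ : IsLeftQuotRing ι) (hf : ∀ s : R, Reg s → IsUnit (f s)) (q : Q) :
    T :=
  (hQ.exists_mul_eq hf q).choose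

theorem map_mul_liftFun (hQ : IsLeftQuotRing ι) (hf : ∀ s : R, Reg s → IsUnit (f s))
    {q : Q} {a s : R} (h : ι s * q = ι a) :
    f s * hQ.liftFun hf q = f a := by
  obtain ⟨a', s', hs', h', hu⟩ := (hQ.exists_mul_eq hf q).choose_spec
  exact hQ.map_mul_eq_of_frac hf hs' h' h hu

theorem liftFun_eq (hQ : IsLeftQuotRing ι) (hf : ∀ s : R, Reg s → IsUnit (f s))
    {q : Q} {a s : R} (hs : Reg s) (h : ι s * q = ι a) {u : T}
    (hu : f s * u = f a) : hQ.liftFun hf q = u :=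
  (hf s hs).mul_left_cancel ((hQ.map_mul_liftFun hf h).trans hu.symm)

theorem liftFun_apply (hQ : IsLeftQuotRing ι) (hf : ∀ s : R, Reg s → IsUnit (f s))
    (r : R) : hQ.liftFun hf (ι r) = f r :=
  hQ.liftFun_eq hf (s := 1) (a := r) reg_one (by simp) (by simp)

noncomputable def lift (hQ : IsLeftQuotRing ι) (hf : ∀ s : R, Reg s → IsUnit (f s)) : Q →+* T where
  toFun := hQ.liftFun hf
  map_one' := by simpa using hQ.liftFun_apply hf 1
  map_zero' := by simpa using hQ.liftFun_apply hf 0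
  map_add' x y := by
    obtain ⟨s, a, b, hs, hx, hy⟩ := hQ.exists_common_denominator x y
    refine hQ.liftFun_eq hf (a := a + b) hs (by rw [mul_add, hx, hy, map_add]) ?_
    rw [mul_add, hQ.map_mul_liftFun hf hx, hQ.map_mul_liftFun hf hy, map_add]
  map_mul' x y := by
    obtain ⟨a, s, hs, hx⟩ := hQ.frac x
    obtain ⟨b, d, hd, hy⟩ := hQ.frac y
    obtain ⟨t, c, ht, htc⟩ := hQ.exists_ore (a := a) hd
    refine hQ.liftFun_eq hf (s := t * s) (a := c * b) (ht.mul hs) ?_ ?_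
    · rw [map_mul, mul_assoc, ← mul_assoc (ι s), hx, ← mul_assoc, ← map_mul, htc, map_mul,
        mul_assoc, hy, map_mul]
    · rw [map_mul, mul_assoc, ← mul_assoc (f s), hQ.map_mul_liftFun hf hx, ← mul_assoc,
        ← map_mul, htc, map_mul, mul_assoc, hQ.map_mul_liftFun hf hy, map_mul]

theorem lift_apply (hQ : IsLeftQuotRing ι) (hf : ∀ s : R, Reg s → IsUnit (f s))
    (r : R) : hQ.lift hf (ι r) = f r := hQ.liftFun_apply hf r

theorem lift_injective (hQ : IsLeftQuotRing ι) (hf : ∀ s : R, Reg s → IsUnit (f s))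
    (hfi : Function.Injective f) : Function.Injective (hQ.lift hf) := by
  refine (injective_iff_map_eq_zero _).2 fun q hq => ?_
  obtain ⟨a, s, hs, h⟩ := hQ.frac q
  have ha : a = 0 := hfi <| by
    rw [← hQ.map_mul_liftFun hf h, map_zero]
    exact (congrArg (f s * ·) hq).trans (mul_zero _)
  rw [ha, map_zero] at h
  exact (hQ.unit s hs).mul_left_cancel (h.trans (mul_zero _).symm)

end IsLeftQuotRing

theorem IsLeftQuotRing.lift_comp_surjective {R : Type u} {Q : Type v} [Ring R] [Ring Q]
    {ι : R →+* Q} (hQ : IsLeftQuotRing ι) (hsp : IsSemiprimeRing R) (hg : IsLeftGoldie R)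
    {σ : R →+* R} (hinj : Function.Injective σ) {L : Ideal R} (hL : IsEssentialLeftIdeal L)
    (hLσ : (L : Set R) ⊆ Set.range σ) (hf : ∀ s : R, Reg s → IsUnit (ι.comp σ s)) :
    Function.Surjective (hQ.lift hf) := by
  intro q
  obtain ⟨a, s, hs, h⟩ := hQ.frac q
  -- clear the denominators `s` and `a` into `L ⊆ σ(R)` by a regular `t`
  obtain ⟨t, ⟨htsL, htaL⟩, ht⟩ := ((hL.comap (LinearMap.toSpanSingleton R R s)).inf
    (hL.comap (LinearMap.toSpanSingleton R R a))).exists_reg_mem hsp hg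
  obtain ⟨s₀, hs₀⟩ := hLσ htsL
  obtain ⟨a₀, ha₀⟩ := hLσ htaL
  simp only [LinearMap.toSpanSingleton_apply, smul_eq_mul] at hs₀ ha₀
  have hts : Reg (t * s) := ht.mul hs
  have hs₀reg : Reg s₀ := hsp.reg_of_leftReg hg fun x hx => hinj <| by
    rw [map_zero]
    exact hts.1 _ (by rw [← hs₀, ← map_mul, hx, map_zero])
  obtain ⟨u, hu⟩ := hQ.unit s₀ hs₀reg
  refine ⟨↑u⁻¹ * ι a₀, (hQ.unit _ hts).mul_left_cancel ?_⟩
  have h₀ := hQ.map_mul_liftFun hf (q := ↑u⁻¹ * ι a₀) (a := a₀)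
    (by rw [← hu, Units.mul_inv_cancel_left])
  simp only [RingHom.comp_apply, hs₀, ha₀] at h₀
  refine h₀.trans ?_
  rw [map_mul, map_mul, mul_assoc, h]

/-- For a semiprime left Goldie ring `R` and an endomorphism `σ` with large
image: `σ` is injective iff it maps regular elements to regular elements;
and in that case `σ` extends to an automorphism of the classical left
quotient ring of `R`. -/
theorem stmt12 {R : Type u} [Ring R] (hsp : IsSemiprimeRing R) (hg : IsLeftGoldie R)
    (σ : R →+* R) (hli : HasLargeImage ⇑σ) :
    (Function.Injective σ ↔ ∀ a : R, Reg a → Reg (σ a)) ∧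
    (Function.Injective σ →
      ∀ (Q : Type v) [Ring Q] (ι : R →+* Q), IsLeftQuotRing ι →
        ∃ τ : Q ≃+* Q, ∀ r : R, τ (ι r) = ι (σ r)) := by
  obtain ⟨L, hL, -, hLσ⟩ := hli
  have hreg (hinj : Function.Injective σ) (a : R) (ha : Reg a) : Reg (σ a) :=
    hsp.reg_of_leftReg hg (leftReg_map_of_injective hinj hL hLσ ha.1)
  refine ⟨⟨hreg, fun hσ => ?_⟩, fun hinj Q _ ι hQ => ?_⟩
  · exact injective_of_forall_lAnnIdeal_ker_mul_eq_zero hsp hg.2 hL hLσ fun v hv =>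
      map_eq_zero_of_forall_lAnnIdeal_ker_mul_eq_zero hsp hg hσ hv
  · have hf (s : R) (hs : Reg s) : IsUnit (ι.comp σ s) := hQ.unit _ (hreg hinj s hs)
    exact ⟨RingEquiv.ofBijective (hQ.lift hf) ⟨hQ.lift_injective hf (hQ.inj.comp hinj),
      hQ.lift_comp_surjective hsp hg hinj hL hLσ hf⟩, hQ.lift_apply hf⟩
end

section
/- Let σ be an injective endomorphism of a semiprime left noetherian ring R. Then σ is an automorphism of R if and only if there exists an essential left ideal L of R with L ⊆ σ(R) such that σ^n(L) is a left ideal of R for every n ∈ ℕ. -/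
universe u v

/-! Only surjectivity needs proof. Goldie's construction gives a left-regular element `c` of the
essential left ideal `L`: a maximal sum `b₁ + ⋯ + bₖ` of elements of `L` with `bⱼ bᵢ = 0` for
`j > i` and `lAnn(bᵢ²) = lAnn(bᵢ)`, which exist in every nonzero left ideal because a semiprime
left noetherian ring has no nonzero nil left ideals. As `L ⊆ σ(R)` is essential, every `σⁿ(c)` is
again left-regular. The left ideals `Xₙ = {x | σⁿ(x) ∈ R σⁿ(c)}` increase, so `Xₙ = X_N` for
`n ≥ N`. For `r ∈ R` write `r σᴺ⁺¹(c) = σᴺ⁺¹(l)` with `l ∈ L`; then `l ∈ X_{N+1} = X_N`, so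
`σᴺ(l) = z σᴺ(c)` and `(r - σ(z)) σᴺ⁺¹(c) = 0`, whence `r = σ(z)`. -/

section LeftAnnihilator

variable {R : Type u} [Ring R]

@[simp]
theorem mem_lAnnIdeal {X : Set R} {a : R} : a ∈ lAnnIdeal R X ↔ ∀ x ∈ X, a * x = 0 := Iff.rfl

theorem mul_mul_eq_zero_of_isNilpotent {a r : R} (hra : IsNilpotent (r * a))
    (hann : ∀ z : R, z * (a * r * a) = 0 → z * a = 0) : a * r * a = 0 := by
  obtain ⟨n, hn⟩ := hra
  suffices ∀ k, (r * a) ^ (k + 1) = 0 → r * a = 0 by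
    rw [mul_assoc, this n (by rw [pow_succ, hn, zero_mul]), mul_zero]
  intro k
  induction k with
  | zero => simp
  | succ k ih =>
    intro hk
    apply ih
    have := hann ((r * a) ^ k * r) (by
      simpa only [pow_succ, mul_assoc] using hk)
    simpa only [pow_succ, mul_assoc] using this

/-- The invariant of Goldie's construction of a left-regular element. -/
structure IsLAnnWitness (S : Set R) (c : R) : Prop where
  mem_span : c ∈ Ideal.span S
  lAnn_le : lAnnIdeal R {c} ≤ lAnnIdeal R S
  disjoint : Disjoint (Ideal.span S) (lAnnIdeal R S)

theorem IsLAnnWitness.insert {S : Set R} {c b : R} (hw : IsLAnnWitness S c)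
    (hb : b ∈ lAnnIdeal R S) (hbb : ∀ x : R, x * (b * b) = 0 → x * b = 0) :
    IsLAnnWitness (insert b S) (c + b) := by
  have hbS : ∀ s ∈ S, b * s = 0 := hb
  refine ⟨add_mem (Ideal.span_mono (Set.subset_insert b S) hw.mem_span)
    (Ideal.subset_span (Set.mem_insert b S)), fun x hx => ?_, ?_⟩
  · have hx : x * (c + b) = 0 := by simpa using hx
    -- `x c` lies in `R S` and kills `S`, because `b` does
    have hxc : x * c = 0 := by
      refine Submodule.disjoint_def.mp hw.disjoint _ (Ideal.mul_mem_left _ x hw.mem_span)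
        fun s hs => ?_
      simpa [mul_add, add_mul, mul_assoc, hbS s hs] using congrArg (· * s) hx
    have hxb : x * b = 0 := by rwa [mul_add, hxc, zero_add] at hx
    simpa [hxb] using hw.lAnn_le (by simpa using hxc)
  · rw [Submodule.disjoint_def]
    intro y hy hyann
    rw [Ideal.span_insert, Submodule.mem_sup] at hy
    obtain ⟨_, hb', j, hj, rfl⟩ := hy
    obtain ⟨t, rfl⟩ := Ideal.mem_span_singleton'.mp hb'
    simp only [mem_lAnnIdeal, Set.forall_mem_insert] at hyann
    have hj0 : j = 0 := by
      refine Submodule.disjoint_def.mp hw.disjoint _ hj fun s hs => ?_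
      simpa [add_mul, mul_assoc, hbS s hs] using hyann.2 s hs
    subst hj0
    have htb : t * b = 0 := hbb t (by simpa [mul_assoc] using hyann.1)
    simp [htb]

variable [IsNoetherianRing R]

theorem IsSemiprimeRing.exists_not_isNilpotent (hsp : IsSemiprimeRing R) {T : Ideal R}
    (hT : T ≠ ⊥) : ∃ a ∈ T, ¬ IsNilpotent a := by
  by_contra! hnil
  obtain ⟨x, hxT, hx0⟩ := (Submodule.ne_bot_iff T).mp hT
  obtain ⟨_, ⟨a, haT, ha0, rfl⟩, hmax⟩ :=
    set_has_maximal_iff_noetherian.mpr (inferInstance : IsNoetherian R R)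
      {J | ∃ x ∈ T, x ≠ 0 ∧ J = lAnnIdeal R {x}} ⟨_, x, hxT, hx0, rfl⟩
  obtain ⟨r, hr⟩ : ∃ r, a * r * a ≠ 0 := by
    by_contra! h
    exact ha0 (hsp a h)
  apply hr
  refine mul_mul_eq_zero_of_isNilpotent (hnil _ (T.mul_mem_left r haT)) fun z hz => ?_
  have hle : lAnnIdeal R {a} ≤ lAnnIdeal R {a * r * a} := fun y hy => by
    simp_all [← mul_assoc]
  have heq := hle.lt_or_eq.resolve_left (hmax _ ⟨_, T.mul_mem_left _ haT, hr, rfl⟩)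
  have hz : z ∈ lAnnIdeal R {a * r * a} := by simpa using hz
  simpa [← heq] using hz

theorem IsSemiprimeRing.exists_lAnn_mul_self_le (hsp : IsSemiprimeRing R) {T : Ideal R}
    (hT : T ≠ ⊥) : ∃ b ∈ T, b ≠ 0 ∧ ∀ x : R, x * (b * b) = 0 → x * b = 0 := by
  obtain ⟨a, haT, ha⟩ := hsp.exists_not_isNilpotent hT
  have hmono : Monotone fun n => lAnnIdeal R {a ^ n} := monotone_nat_of_le_succ fun n x hx => by
    simp_all [pow_succ, ← mul_assoc]
  obtain ⟨N, hN⟩ := monotone_stabilizes_iff_noetherian.mpr (inferInstance : IsNoetherian R R)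
    ⟨_, hmono⟩
  have hN : ∀ m, N ≤ m → lAnnIdeal R {a ^ m} = lAnnIdeal R {a ^ N} := fun m hm => (hN m hm).symm
  refine ⟨a ^ (N + 1), T.pow_mem_of_mem haT _ N.succ_pos, fun h => ha ⟨_, h⟩, fun x hx => ?_⟩
  have h1 : x ∈ lAnnIdeal R {a ^ (2 * N + 2)} := by
    simpa [← pow_add, show N + 1 + (N + 1) = 2 * N + 2 by omega] using hx
  have h2 : x ∈ lAnnIdeal R {a ^ (N + 1)} := by
    rwa [hN (N + 1) (by omega), ← hN (2 * N + 2) (by omega)]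
  simpa using h2

theorem IsSemiprimeRing.exists_leftReg_mem (hsp : IsSemiprimeRing R) {L : Ideal R}
    (hess : IsEssentialLeftIdeal L) : ∃ c ∈ L, LeftReg c := by
  have hempty : IsLAnnWitness (∅ : Set R) 0 :=
    ⟨zero_mem _, fun x _ => by simp, by simp⟩
  obtain ⟨_, ⟨S, c, hcL, hw, rfl⟩, hmax⟩ :=
    set_has_maximal_iff_noetherian.mpr (inferInstance : IsNoetherian R R)
      {J | ∃ S c, c ∈ L ∧ IsLAnnWitness S c ∧ J = Ideal.span S} ⟨_, ∅, 0, L.zero_mem, hempty, rfl⟩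
  have hLS : L ⊓ lAnnIdeal R S = ⊥ := by
    by_contra hne
    obtain ⟨b, hb, hb0, hbb⟩ := hsp.exists_lAnn_mul_self_le hne
    refine hmax _ ⟨insert b S, c + b, L.add_mem hcL hb.1, hw.insert hb.2 hbb, rfl⟩ <|
      (Ideal.span_mono (Set.subset_insert b S)).lt_of_ne fun h => hb0 ?_
    exact Submodule.disjoint_def.mp hw.disjoint b (h ▸ Ideal.subset_span (Set.mem_insert b S)) hb.2
  have hS : lAnnIdeal R S = ⊥ := by
    by_contra h
    exact hess _ h hLS
  refine ⟨c, hcL, fun x hx => ?_⟩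
  have := hw.lAnn_le (show x ∈ lAnnIdeal R {c} by simpa using hx)
  rwa [hS, Submodule.mem_bot] at this

end LeftAnnihilator

section Endomorphism

variable {R : Type u} [Ring R]

theorem LeftReg.map_of_essential_subset_range {σ : R →+* R} (hinj : Function.Injective σ)
    {L : Ideal R} (hess : IsEssentialLeftIdeal L) (hLσ : (L : Set R) ⊆ Set.range σ) {c : R}
    (hc : LeftReg c) : LeftReg (σ c) := by
  intro x hx
  by_contra hx0
  obtain ⟨y, hy, hy0⟩ := (Submodule.ne_bot_iff _).mp
    (hess (Ideal.span {x}) (by simpa [Ideal.span_singleton_eq_bot] using hx0))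
  obtain ⟨hyL, hyx⟩ := Submodule.mem_inf.mp hy
  obtain ⟨a, rfl⟩ := Ideal.mem_span_singleton'.mp hyx
  obtain ⟨u, hu⟩ := hLσ hyL
  have huc : u * c = 0 := hinj (by rw [map_mul, hu, map_zero, mul_assoc, hx, mul_zero])
  exact hy0 (by rw [← hu, hc u huc, map_zero])

theorem surjective_of_leftReg_iterate [IsNoetherianRing R] (σ : R →+* R) {c : R}
    (hreg : ∀ n, LeftReg ((σ ^ n) c)) (hmem : ∀ n (r : R), r * (σ ^ n) c ∈ Set.range ⇑(σ ^ n)) :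
    Function.Surjective σ := by
  have hσ : ∀ n x, (σ ^ (n + 1)) x = σ ((σ ^ n) x) := fun n x => by
    rw [pow_succ', RingHom.coe_mul, Function.comp_apply]
  let X : ℕ →o Ideal R := ⟨fun n => (Ideal.span {(σ ^ n) c}).comap (σ ^ n),
    monotone_nat_of_le_succ fun n x hx => by
      obtain ⟨y, hy⟩ := Ideal.mem_span_singleton'.mp (Ideal.mem_comap.mp hx)
      refine Ideal.mem_comap.mpr (Ideal.mem_span_singleton'.mpr ⟨σ y, ?_⟩)
      rw [hσ, hσ, ← hy, map_mul]⟩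
  obtain ⟨N, hN⟩ := monotone_stabilizes_iff_noetherian.mpr (inferInstance : IsNoetherian R R) X
  intro r
  obtain ⟨l, hl⟩ := hmem (N + 1) r
  have hlX : l ∈ X (N + 1) := Ideal.mem_comap.mpr (Ideal.mem_span_singleton'.mpr ⟨r, hl.symm⟩)
  rw [← hN (N + 1) N.le_succ] at hlX
  obtain ⟨z, hz⟩ := Ideal.mem_span_singleton'.mp (Ideal.mem_comap.mp hlX)
  refine ⟨z, (sub_eq_zero.mp (hreg (N + 1) _ ?_)).symm⟩
  rw [sub_mul, ← hl, hσ, hσ, ← hz, map_mul, sub_self]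

end Endomorphism

/-- An injective endomorphism `σ` of a semiprime left noetherian ring `R`
is an automorphism iff there is an essential left ideal `L ⊆ σ(R)` of `R`
such that `σⁿ(L)` is a left ideal of `R` for every `n`. -/
theorem stmt16 {R : Type u} [Ring R] (hsp : IsSemiprimeRing R) [IsNoetherianRing R]
    (σ : R →+* R) (hinj : Function.Injective σ) :
    Function.Bijective σ ↔
      ∃ L : Ideal R, IsEssentialLeftIdeal L ∧ (L : Set R) ⊆ Set.range σ ∧
        ∀ n : ℕ, ∃ I : Ideal R, (I : Set R) = (⇑σ)^[n] '' (L : Set R) := by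
  constructor
  · intro hbij
    refine ⟨⊤, fun I hI => by rwa [top_inf_eq], fun x _ => hbij.2 x, fun n => ⟨⊤, ?_⟩⟩
    rw [Submodule.top_coe, Set.image_univ, (hbij.2.iterate n).range_eq]
  · rintro ⟨L, hess, hLσ, hLn⟩
    obtain ⟨c, hcL, hc⟩ := hsp.exists_leftReg_mem hess
    have hreg : ∀ n, LeftReg ((σ ^ n) c) := by
      intro n
      induction n with
      | zero => exact hc
      | succ n ih =>
        rw [pow_succ', RingHom.coe_mul, Function.comp_apply]
        exact ih.map_of_essential_subset_range hinj hess hLσ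
    have hmem : ∀ n (r : R), r * (σ ^ n) c ∈ Set.range ⇑(σ ^ n) := by
      intro n r
      obtain ⟨I, hI⟩ := hLn n
      have hcI : (σ ^ n) c ∈ (I : Set R) := hI ▸ ⟨c, hcL, by simp⟩
      have hrcI : r * (σ ^ n) c ∈ (I : Set R) := I.mul_mem_left r hcI
      rw [hI] at hrcI
      obtain ⟨l, -, hl⟩ := hrcI
      exact ⟨l, by simpa using hl⟩
    exact ⟨hinj, surjective_of_leftReg_iterate σ hreg hmem⟩
end
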